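/- arXiv:2310.03393 — 2 statements merged into one kernel-verified Lean document; each statement's English description precedes it below -/
import Mathlib

section
/- In the Black–Scholes model, the function u(t, s) = s·e^{−δ(T−t)}Φ(d₁) − K·e^{−R(T−t)}Φ(d₂), with d_{1/2} = (log(s/K) + (R − δ ± b²/2)(T−t))/(b√(T−t)), satisfies the terminal condition lim_{t→T⁻} u(t, s) = max(s − K, 0) for every s > 0, s ≠ K. -/
open Real

/-- The standard normal cumulative distribution function. -/
noncomputable def stdNormalCDF (x : ℝ) : ℝ :=
  ∫ t in Set.Iic x, (Real.sqrt (2 * Real.pi))⁻¹ * Real.exp (-(t ^ 2) / 2)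

/-- `d₁` in the Black–Scholes formula. -/
noncomputable def bsD1 (T K b R δ t s : ℝ) : ℝ :=
  (Real.log (s / K) + (R - δ + b ^ 2 / 2) * (T - t)) / (b * Real.sqrt (T - t))

/-- `d₂` in the Black–Scholes formula. -/
noncomputable def bsD2 (T K b R δ t s : ℝ) : ℝ :=
  (Real.log (s / K) + (R - δ - b ^ 2 / 2) * (T - t)) / (b * Real.sqrt (T - t))

/-- The Black–Scholes price function
`u(t,s) = s e^{−δ(T−t)} Φ(d₁) − K e^{−R(T−t)} Φ(d₂)`. -/
noncomputable def bsPrice (T K b R δ t s : ℝ) : ℝ :=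
  s * Real.exp (-δ * (T - t)) * stdNormalCDF (bsD1 T K b R δ t s)
    - K * Real.exp (-R * (T - t)) * stdNormalCDF (bsD2 T K b R δ t s)

/-! The limits of `Φ` at `±∞` come from identifying `Φ` with the CDF of the standard Gaussian
law; the limits of `d₁, d₂` from `d = (log (s / K) + c (T - t)) / (b √(T - t))`, whose numerator
tends to `log (s / K)` while the denominator tends to `0⁺`. -/

open Filter Topology ProbabilityTheory

theorem stdNormalCDF_eq_cdf_gaussianReal : stdNormalCDF = cdf (gaussianReal 0 1) := by
  funext x
  rw [cdf_eq_real, MeasureTheory.measureReal_def, gaussianReal_apply_eq_integral _ one_ne_zero,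
    ENNReal.toReal_ofReal (MeasureTheory.integral_nonneg (gaussianPDFReal_nonneg 0 1))]
  simp [stdNormalCDF, gaussianPDFReal]

theorem tendsto_stdNormalCDF_atTop : Tendsto stdNormalCDF atTop (𝓝 1) := by
  rw [stdNormalCDF_eq_cdf_gaussianReal]
  exact tendsto_cdf_atTop _

theorem tendsto_stdNormalCDF_atBot : Tendsto stdNormalCDF atBot (𝓝 0) := by
  rw [stdNormalCDF_eq_cdf_gaussianReal]
  exact tendsto_cdf_atBot _

section LeftLimit

variable {T : ℝ}

theorem tendsto_add_mul_sub_nhdsLT (L c : ℝ) :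
    Tendsto (fun t => L + c * (T - t)) (𝓝[<] T) (𝓝 L) :=
  ((by fun_prop : Continuous fun t => L + c * (T - t)).tendsto' T L (by simp)).mono_left
    nhdsWithin_le_nhds

theorem tendsto_inv_mul_sqrt_sub_nhdsLT {b : ℝ} (hb : 0 < b) :
    Tendsto (fun t => (b * √(T - t))⁻¹) (𝓝[<] T) atTop := by
  refine Tendsto.inv_tendsto_nhdsGT_zero (tendsto_nhdsWithin_of_tendsto_nhds_of_eventually_within
    _ ?_ ?_)
  · have hcont : Continuous fun t => b * √(T - t) := by fun_prop
    exact (hcont.tendsto' T 0 (by simp)).mono_left nhdsWithin_le_nhds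
  · filter_upwards [self_mem_nhdsWithin] with t ht
    exact mul_pos hb (sqrt_pos.2 (sub_pos.2 ht))

theorem tendsto_add_mul_sub_div_mul_sqrt_sub_atTop {b L : ℝ} (hb : 0 < b) (hL : 0 < L) (c : ℝ) :
    Tendsto (fun t => (L + c * (T - t)) / (b * √(T - t))) (𝓝[<] T) atTop := by
  simp only [div_eq_mul_inv]
  exact (tendsto_add_mul_sub_nhdsLT L c).pos_mul_atTop hL (tendsto_inv_mul_sqrt_sub_nhdsLT hb)

theorem tendsto_add_mul_sub_div_mul_sqrt_sub_atBot {b L : ℝ} (hb : 0 < b) (hL : L < 0) (c : ℝ) :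
    Tendsto (fun t => (L + c * (T - t)) / (b * √(T - t))) (𝓝[<] T) atBot := by
  simp only [div_eq_mul_inv]
  exact (tendsto_add_mul_sub_nhdsLT L c).neg_mul_atTop hL (tendsto_inv_mul_sqrt_sub_nhdsLT hb)

theorem tendsto_exp_neg_mul_sub_nhdsLT (a : ℝ) :
    Tendsto (fun t => exp (-a * (T - t))) (𝓝[<] T) (𝓝 1) := by
  simpa [Function.comp_def] using
    (continuous_exp.tendsto 0).comp (tendsto_add_mul_sub_nhdsLT 0 (-a))

theorem tendsto_bsPrice {K b R δ s p : ℝ}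
    (h₁ : Tendsto (fun t => stdNormalCDF (bsD1 T K b R δ t s)) (𝓝[<] T) (𝓝 p))
    (h₂ : Tendsto (fun t => stdNormalCDF (bsD2 T K b R δ t s)) (𝓝[<] T) (𝓝 p)) :
    Tendsto (fun t => bsPrice T K b R δ t s) (𝓝[<] T) (𝓝 ((s - K) * p)) := by
  have h := ((tendsto_const_nhds (x := s)).mul (tendsto_exp_neg_mul_sub_nhdsLT δ)).mul h₁ |>.sub
    (((tendsto_const_nhds (x := K)).mul (tendsto_exp_neg_mul_sub_nhdsLT R)).mul h₂)
  rwa [show s * 1 * p - K * 1 * p = (s - K) * p by ring] at h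

end LeftLimit

theorem bsPrice_tendsto_payoff_general (T K b R δ : ℝ)
    (hK : 0 < K) (hb : 0 < b) :
    ∀ s : ℝ, 0 < s → s ≠ K →
      Filter.Tendsto (fun t => bsPrice T K b R δ t s)
        (nhdsWithin T (Set.Iio T)) (nhds (max (s - K) 0)) := by
  intro s hs hne
  rcases hne.lt_or_gt with hlt | hgt
  · have hL : log (s / K) < 0 := log_neg (div_pos hs hK) ((div_lt_one hK).2 hlt)
    have hΦ := fun c => tendsto_stdNormalCDF_atBot.comp
      (tendsto_add_mul_sub_div_mul_sqrt_sub_atBot (T := T) hb hL c)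
    rw [max_eq_right (by linarith)]
    simpa using tendsto_bsPrice (hΦ _) (hΦ _)
  · have hL : 0 < log (s / K) := log_pos ((one_lt_div hK).2 hgt)
    have hΦ := fun c => tendsto_stdNormalCDF_atTop.comp
      (tendsto_add_mul_sub_div_mul_sqrt_sub_atTop (T := T) hb hL c)
    rw [max_eq_left (by linarith)]
    simpa using tendsto_bsPrice (hΦ _) (hΦ _)

/-- As `t → T⁻`, the Black–Scholes price converges to the call payoff
`max(s − K, 0)` for every `s > 0` with `s ≠ K`. -/
theorem bsPrice_tendsto_payoff (T K b R δ : ℝ)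
    (hT : 0 < T) (hK : 0 < K) (hb : 0 < b) :
    ∀ s : ℝ, 0 < s → s ≠ K →
      Filter.Tendsto (fun t => bsPrice T K b R δ t s)
        (nhdsWithin T (Set.Iio T)) (nhds (max (s - K) 0)) :=
  bsPrice_tendsto_payoff_general T K b R δ hK hb
end

section
/- The Black–Scholes function u(t,s) = s e^{−δ(T−t)}Φ(d₁) − K e^{−R(T−t)}Φ(d₂) satisfies ∂u/∂s = e^{−δ(T−t)} Φ(d₁) for all t < T, s > 0. -/
open Real

/-! Since `d₁` and `d₂` differ by the constant `c = b√(T−t)`, both have the same `s`-derivative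
`1/(s c)`, so differentiating `u` produces, besides `e^{−δ(T−t)} Φ(d₁)`, the term
`(s e^{−δ(T−t)} φ(d₁) − K e^{−R(T−t)} φ(d₂)) / (s c)`. It vanishes because the Gaussian shift
`φ(d₁ − c) = φ(d₁) e^{c d₁ − c²/2}` together with `c d₁ − c²/2 = log(s/K) + (R − δ)(T − t)` gives
`K e^{−R(T−t)} φ(d₂) = s e^{−δ(T−t)} φ(d₁)`. -/

open MeasureTheory ProbabilityTheory

theorem hasDerivAt_integral_Iic {E : Type*} [NormedAddCommGroup E] [NormedSpace ℝ E]
    [CompleteSpace E] {f : ℝ → E} (hf : Integrable f) {x : ℝ} (hx : ContinuousAt f x) :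
    HasDerivAt (fun y => ∫ u in Set.Iic y, f u) (f x) x := by
  have split : ∀ y, ∫ u in Set.Iic y, f u = (∫ u in (0 : ℝ)..y, f u) + ∫ u in Set.Iic 0, f u :=
    fun y => by rw [← intervalIntegral.integral_Iic_sub_Iic hf.integrableOn hf.integrableOn,
      sub_add_cancel]
  rw [funext split]
  exact (intervalIntegral.integral_hasDerivAt_right hf.intervalIntegrable
    hf.aestronglyMeasurable.stronglyMeasurableAtFilter hx).add_const _

theorem stdNormalCDF_eq_integral_gaussianPDFReal (x : ℝ) :
    stdNormalCDF x = ∫ u in Set.Iic x, gaussianPDFReal 0 1 u := by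
  simp [stdNormalCDF, gaussianPDFReal]

theorem hasDerivAt_stdNormalCDF (x : ℝ) :
    HasDerivAt stdNormalCDF (gaussianPDFReal 0 1 x) x := by
  simp_rw [funext stdNormalCDF_eq_integral_gaussianPDFReal]
  exact hasDerivAt_integral_Iic (integrable_gaussianPDFReal 0 1)
    (by unfold gaussianPDFReal; fun_prop)

theorem gaussianPDFReal_zero_one_sub_eq_mul_exp (x c : ℝ) :
    gaussianPDFReal 0 1 (x - c) = gaussianPDFReal 0 1 x * exp (c * x - c ^ 2 / 2) := by
  simp only [gaussianPDFReal, sub_zero, NNReal.coe_one, mul_one, mul_assoc, ← exp_add]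
  ring_nf

theorem hasDerivAt_log_div {K x : ℝ} (hK : K ≠ 0) (hx : x ≠ 0) :
    HasDerivAt (fun y => log (y / K)) x⁻¹ x := by
  have h := (hasDerivAt_log (div_ne_zero hx hK)).comp x ((hasDerivAt_id x).div_const K)
  exact h.congr_deriv (by field_simp)

section BlackScholes

variable {T K b R δ t s : ℝ}

theorem hasDerivAt_bsD1 (hK : K ≠ 0) (hs : s ≠ 0) :
    HasDerivAt (bsD1 T K b R δ t) (s⁻¹ / (b * √(T - t))) s :=
  ((hasDerivAt_log_div hK hs).add_const _).div_const _

theorem hasDerivAt_bsD2 (hK : K ≠ 0) (hs : s ≠ 0) :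
    HasDerivAt (bsD2 T K b R δ t) (s⁻¹ / (b * √(T - t))) s :=
  ((hasDerivAt_log_div hK hs).add_const _).div_const _

theorem bsD2_eq_bsD1_sub : bsD2 T K b R δ t s = bsD1 T K b R δ t s - b * √(T - t) := by
  rcases eq_or_ne (b * √(T - t)) 0 with hc | hc
  · simp [bsD1, bsD2, hc]
  have hτ : 0 < T - t := sqrt_ne_zero'.1 (right_ne_zero_of_mul hc)
  unfold bsD1 bsD2
  field_simp
  rw [sq_sqrt hτ.le]
  ring

theorem spot_mul_pdf_bsD1_eq_strike_mul_pdf_bsD2 (hK : 0 < K) (hb : b ≠ 0) (htT : t < T)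
    (hs : 0 < s) :
    s * exp (-δ * (T - t)) * gaussianPDFReal 0 1 (bsD1 T K b R δ t s)
      = K * exp (-R * (T - t)) * gaussianPDFReal 0 1 (bsD2 T K b R δ t s) := by
  have hτ : 0 < T - t := sub_pos.2 htT
  have hc : b * √(T - t) ≠ 0 := mul_ne_zero hb (sqrt_pos.2 hτ).ne'
  have hexponent : b * √(T - t) * bsD1 T K b R δ t s - (b * √(T - t)) ^ 2 / 2
      = log (s / K) + (R - δ) * (T - t) := by
    rw [bsD1, mul_div_cancel₀ _ hc, mul_pow, sq_sqrt hτ.le]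
    ring
  rw [bsD2_eq_bsD1_sub, gaussianPDFReal_zero_one_sub_eq_mul_exp, hexponent, exp_add,
    exp_log (div_pos hs hK), show -δ * (T - t) = -R * (T - t) + (R - δ) * (T - t) by ring,
    exp_add]
  field_simp

end BlackScholes

theorem bsPrice_delta_general (T K b R δ : ℝ) (hK : 0 < K) (hb : 0 < b)
    (t : ℝ) (htT : t < T) (s : ℝ) (hs : 0 < s) :
    HasDerivAt (fun x => bsPrice T K b R δ t x)
      (Real.exp (-δ * (T - t)) * stdNormalCDF (bsD1 T K b R δ t s)) s := by
  have hΦ₁ : HasDerivAt (fun x => stdNormalCDF (bsD1 T K b R δ t x)) _ s :=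
    (hasDerivAt_stdNormalCDF _).comp s (hasDerivAt_bsD1 hK.ne' hs.ne')
  have hΦ₂ : HasDerivAt (fun x => stdNormalCDF (bsD2 T K b R δ t x)) _ s :=
    (hasDerivAt_stdNormalCDF _).comp s (hasDerivAt_bsD2 hK.ne' hs.ne')
  have hu := (((hasDerivAt_id s).mul_const (exp (-δ * (T - t)))).mul hΦ₁).sub
    (hΦ₂.const_mul (K * exp (-R * (T - t))))
  refine hu.congr_deriv ?_
  have key := spot_mul_pdf_bsD1_eq_strike_mul_pdf_bsD2 (R := R) (δ := δ) hK hb.ne' htT hs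
  simp only [id, one_mul]
  linear_combination (s⁻¹ / (b * √(T - t))) * key

/-- Black–Scholes delta: `∂u/∂s = e^{−δ(T−t)} Φ(d₁)` for all `t ∈ [0,T)`,
`s > 0`. -/
theorem bsPrice_delta (T K b R δ : ℝ) (hT : 0 < T) (hK : 0 < K) (hb : 0 < b)
    (t : ℝ) (ht0 : 0 ≤ t) (htT : t < T) (s : ℝ) (hs : 0 < s) :
    HasDerivAt (fun x => bsPrice T K b R δ t x)
      (Real.exp (-δ * (T - t)) * stdNormalCDF (bsD1 T K b R δ t s)) s :=
  bsPrice_delta_general T K b R δ hK hb t htT s hs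
end
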